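/- König's edge-coloring theorem for regular bipartite graphs: every k-regular bipartite graph admits a proper edge coloring with exactly k colors, i.e., its edge set can be partitioned into k perfect matchings. -/

import Mathlib

/-!
Double counting edges between a vertex set `s` and its neighbourhood shows that a `k`-regular
finite graph with `k > 0` satisfies Hall's condition `|s| ≤ |N(s)|`, so a `k`-regular bipartite
graph has a perfect matching. Deleting it leaves a `(k - 1)`-regular bipartite graph; by
induction its edges split into `k - 1` perfect matchings, and the deleted one is the last colour.
-/

namespace SimpleGraph

variable {V : Type*} {G : SimpleGraph V}

theorem IsBipartiteWith.mono_left {H : SimpleGraph V} {s t : Set V} (hHG : H ≤ G)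
    (hG : G.IsBipartiteWith s t) : H.IsBipartiteWith s t :=
  ⟨hG.disjoint, fun _ _ h => hG.mem_of_adj (hHG h)⟩

theorem ncard_le_ncard_iUnion_neighborSet [Finite V] {k : ℕ} (hk : 0 < k)
    (hreg : ∀ v, (G.neighborSet v).ncard = k) (s : Set V) :
    s.ncard ≤ (⋃ x ∈ s, G.neighborSet x).ncard := by
  classical
  have := Fintype.ofFinite V
  set t := ⋃ x ∈ s, G.neighborSet x
  have hcount : s.toFinset.card * k ≤ t.toFinset.card * k := by
    refine Finset.card_mul_le_card_mul G.Adj (fun a ha => ?_) (fun b _ => ?_)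
    · rw [← hreg a, Set.ncard_eq_toFinset_card']
      refine Finset.card_le_card fun b hb => ?_
      rw [Set.mem_toFinset] at ha hb
      exact (Finset.mem_bipartiteAbove _).mpr ⟨Set.mem_toFinset.mpr (Set.mem_biUnion ha hb), hb⟩
    · rw [← hreg b, Set.ncard_eq_toFinset_card']
      refine Finset.card_le_card fun a ha => ?_
      exact Set.mem_toFinset.mpr ((Finset.mem_bipartiteBelow _).mp ha).2.symm
  rw [Set.ncard_eq_toFinset_card', Set.ncard_eq_toFinset_card']
  exact Nat.le_of_mul_le_mul_right hcount hk

theorem exists_isPerfectMatching_of_ncard_neighborSet_eq [Finite V] {s t : Set V}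
    (hG : G.IsBipartiteWith s t) {k : ℕ} (hk : 0 < k)
    (hreg : ∀ v, (G.neighborSet v).ncard = k) : ∃ M : G.Subgraph, M.IsPerfectMatching := by
  have := Fintype.ofFinite V
  classical
  exact exists_isPerfectMatching_of_forall_ncard_le hG (ncard_le_ncard_iUnion_neighborSet hk hreg)

theorem Subgraph.IsPerfectMatching.existsUnique_mem_edgeSet {M : G.Subgraph}
    (hM : M.IsPerfectMatching) (v : V) :
    ∃! e : G.edgeSet, (e : Sym2 V) ∈ M.edgeSet ∧ v ∈ (e : Sym2 V) := by
  obtain ⟨w, hvw, hw⟩ := M.isPerfectMatching_iff.mp hM v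
  refine ⟨⟨s(v, w), M.adj_sub hvw⟩, ⟨hvw, Sym2.mem_mk_left v w⟩, ?_⟩
  rintro ⟨e, he⟩ ⟨heM, hve⟩
  obtain ⟨u, rfl⟩ := Sym2.mem_iff_exists.mp hve
  obtain rfl := hw u heM
  rfl

theorem ncard_neighborSet_deleteEdges_add_one [Finite V] {M : G.Subgraph}
    (hM : M.IsPerfectMatching) (v : V) :
    ((G.deleteEdges M.edgeSet).neighborSet v).ncard + 1 = (G.neighborSet v).ncard := by
  obtain ⟨w, hvw, hw⟩ := M.isPerfectMatching_iff.mp hM v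
  have hnbr : (G.deleteEdges M.edgeSet).neighborSet v = G.neighborSet v \ {w} := by
    ext u
    simp only [mem_neighborSet, deleteEdges_adj, Subgraph.mem_edgeSet, Set.mem_sdiff,
      Set.mem_singleton_iff]
    exact and_congr_right fun _ => ⟨fun h hu => h (hu ▸ hvw), fun h hu => h (hw u hu)⟩
  rw [hnbr]
  exact Set.ncard_sdiff_singleton_add_one (s := G.neighborSet v) (M.adj_sub hvw)

def IsOneFactorization {ι : Type*} (c : G.edgeSet → ι) : Prop :=
  ∀ (i : ι) (v : V), ∃! e : G.edgeSet, c e = i ∧ v ∈ (e : Sym2 V)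

namespace IsOneFactorization

variable {ι κ : Type*} {c : G.edgeSet → ι}

theorem ne_of_mem_of_mem (hc : IsOneFactorization c) {e₁ e₂ : G.edgeSet} (hne : e₁ ≠ e₂)
    {v : V} (h₁ : v ∈ (e₁ : Sym2 V)) (h₂ : v ∈ (e₂ : Sym2 V)) : c e₁ ≠ c e₂ :=
  fun h => hne ((hc (c e₂) v).unique ⟨h, h₁⟩ ⟨rfl, h₂⟩)

theorem comp_equiv (hc : IsOneFactorization c) (σ : ι ≃ κ) : IsOneFactorization (σ ∘ c) :=
  fun i v => by
    simpa only [Function.comp_apply, ← Equiv.eq_symm_apply] using hc (σ.symm i) v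

theorem exists_option_of_deleteEdges {M : G.Subgraph} (hM : M.IsPerfectMatching)
    {c : (G.deleteEdges M.edgeSet).edgeSet → ι} (hc : IsOneFactorization c) :
    ∃ c' : G.edgeSet → Option ι, IsOneFactorization c' := by
  classical
  have hmem (x : Sym2 V) :
      x ∈ (G.deleteEdges M.edgeSet).edgeSet ↔ x ∈ G.edgeSet ∧ x ∉ M.edgeSet := by
    rw [edgeSet_deleteEdges]
    rfl
  let c' (e : G.edgeSet) : Option ι :=
    if he : (e : Sym2 V) ∈ M.edgeSet then none else some (c ⟨e, (hmem e).2 ⟨e.2, he⟩⟩)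
  refine ⟨c', ?_⟩
  rintro (_ | i) v
  · simpa [c'] using hM.existsUnique_mem_edgeSet v
  · obtain ⟨e, ⟨hce, hve⟩, huniq⟩ := hc i v
    obtain ⟨heG, heM⟩ := (hmem e).1 e.2
    refine ⟨⟨e, heG⟩, ⟨?_, hve⟩, ?_⟩
    · simp only [c', dif_neg heM]
      exact congrArg some hce
    · rintro e' ⟨hce', hve'⟩
      have he'M : (e' : Sym2 V) ∉ M.edgeSet := fun h => by simp [c', h] at hce'
      simp only [c', dif_neg he'M, Option.some.injEq] at hce'
      exact Subtype.ext (congrArg Subtype.val (huniq _ ⟨hce', hve'⟩) :)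

end IsOneFactorization

theorem exists_isOneFactorization_of_isBipartiteWith [Finite V] {s t : Set V}
    (hG : G.IsBipartiteWith s t) {k : ℕ} (hreg : ∀ v, (G.neighborSet v).ncard = k) :
    ∃ c : G.edgeSet → Fin k, IsOneFactorization c := by
  induction k generalizing G with
  | zero =>
    have : IsEmpty G.edgeSet := ⟨fun ⟨e, he⟩ => by
      induction e with
      | h a b => exact ((Set.ncard_eq_zero).mp (hreg a)).subset (he : b ∈ G.neighborSet a)⟩
    exact ⟨isEmptyElim, fun i => i.elim0⟩
  | succ k ih =>
    obtain ⟨M, hM⟩ := exists_isPerfectMatching_of_ncard_neighborSet_eq hG k.succ_pos hreg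
    obtain ⟨c, hc⟩ := ih (hG.mono_left (G.deleteEdges_le M.edgeSet)) fun v =>
      Nat.add_right_cancel ((ncard_neighborSet_deleteEdges_add_one hM v).trans (hreg v))
    obtain ⟨c', hc'⟩ := hc.exists_option_of_deleteEdges hM
    exact ⟨_, hc'.comp_equiv (finSuccEquiv k).symm⟩

end SimpleGraph

/-- König's edge-coloring theorem for regular bipartite graphs: every `k`-regular bipartite
graph admits a proper edge coloring with exactly `k` colors, whose color classes are perfect
matchings (each vertex lies on exactly one edge of each color). -/
theorem stmt_6 {V : Type*} [Fintype V] (G : SimpleGraph V) (k : ℕ) (U : Set V)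
    (hbip : ∀ u v : V, G.Adj u v → (u ∈ U ↔ v ∉ U))
    (hreg : ∀ v : V, (G.neighborSet v).ncard = k) :
    ∃ c : G.edgeSet → Fin k,
      (∀ e₁ e₂ : G.edgeSet, e₁ ≠ e₂ → (∃ v : V, v ∈ (e₁ : Sym2 V) ∧ v ∈ (e₂ : Sym2 V)) →
        c e₁ ≠ c e₂) ∧
      (∀ (i : Fin k) (v : V), ∃! e : G.edgeSet, c e = i ∧ v ∈ (e : Sym2 V)) := by
  have hG : G.IsBipartiteWith U Uᶜ := ⟨disjoint_compl_right, fun u v h => by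
    have := hbip u v h
    simp only [Set.mem_compl_iff]
    tauto⟩
  obtain ⟨c, hc⟩ := SimpleGraph.exists_isOneFactorization_of_isBipartiteWith hG hreg
  exact ⟨c, fun e₁ e₂ hne ⟨v, h₁, h₂⟩ => hc.ne_of_mem_of_mem hne h₁ h₂, hc⟩
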